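/- arXiv:1801.09530 — 2 statements merged into one kernel-verified Lean document; each statement's English description precedes it below -/
import Mathlib

section
/- Let K be a finite abstract simplicial complex and f a discrete Morse function on K. Then every non-critical cell α ∈ K has exactly one exceptional neighbor: either there is exactly one cell β ∈ K with α ⊂ β, dim β = dim α + 1, and f(β) ≤ f(α) and no cell γ ∈ K with γ ⊂ α, dim γ = dim α − 1, and f(γ) ≥ f(α); or there is exactly one such γ and no such β. (Non-critical cells thus come in pairs.) -/
/-- A finite abstract simplicial complex: a finite collection of nonempty finite
subsets of the vertex type, closed under taking nonempty subsets. -/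
def IsSimplicialComplex {V : Type*} [DecidableEq V] (K : Finset (Finset V)) : Prop :=
  (∀ α ∈ K, α.Nonempty) ∧ (∀ α ∈ K, ∀ β : Finset V, β ⊆ α → β.Nonempty → β ∈ K)

/-- `f` is a discrete Morse function on `K`: for every cell `α ∈ K`, there is at
most one coface `β` of one dimension higher with `f β ≤ f α`, and at most one
face `γ` of one dimension lower with `f γ ≥ f α`.  (Dimension of a cell is
`card - 1`, so `dim β = dim α + 1` iff `β.card = α.card + 1`, and
`dim γ = dim α - 1` iff `γ.card + 1 = α.card`.) -/
def IsDMF {V : Type*} [DecidableEq V] (K : Finset (Finset V)) (f : Finset V → ℝ) : Prop :=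
  ∀ α ∈ K,
    (∀ β₁ ∈ K, ∀ β₂ ∈ K,
      (α ⊂ β₁ ∧ β₁.card = α.card + 1 ∧ f β₁ ≤ f α) →
      (α ⊂ β₂ ∧ β₂.card = α.card + 1 ∧ f β₂ ≤ f α) → β₁ = β₂) ∧
    (∀ γ₁ ∈ K, ∀ γ₂ ∈ K,
      (γ₁ ⊂ α ∧ γ₁.card + 1 = α.card ∧ f α ≤ f γ₁) →
      (γ₂ ⊂ α ∧ γ₂.card + 1 = α.card ∧ f α ≤ f γ₂) → γ₁ = γ₂)

/-- A cell `α ∈ K` is critical for `f` if it has no exceptional coface and no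
exceptional face. -/
def IsCritical {V : Type*} [DecidableEq V] (K : Finset (Finset V)) (f : Finset V → ℝ)
    (α : Finset V) : Prop :=
  (¬ ∃ β ∈ K, α ⊂ β ∧ β.card = α.card + 1 ∧ f β ≤ f α) ∧
  (¬ ∃ γ ∈ K, γ ⊂ α ∧ γ.card + 1 = α.card ∧ f α ≤ f γ)

/-- Every non-critical cell of a discrete Morse function has exactly one
exceptional neighbor: either exactly one exceptional coface and no exceptional
face, or exactly one exceptional face and no exceptional coface. -/
theorem dmf_noncritical_unique_exceptional {V : Type*} [DecidableEq V]
    (K : Finset (Finset V)) (f : Finset V → ℝ)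
    (hK : IsSimplicialComplex K) (hf : IsDMF K f) :
    ∀ α ∈ K, ¬ IsCritical K f α →
      ((∃! β : Finset V, β ∈ K ∧ α ⊂ β ∧ β.card = α.card + 1 ∧ f β ≤ f α) ∧
        ¬ ∃ γ ∈ K, γ ⊂ α ∧ γ.card + 1 = α.card ∧ f α ≤ f γ) ∨
      ((∃! γ : Finset V, γ ∈ K ∧ γ ⊂ α ∧ γ.card + 1 = α.card ∧ f α ≤ f γ) ∧
        ¬ ∃ β ∈ K, α ⊂ β ∧ β.card = α.card + 1 ∧ f β ≤ f α) := by
  intro α hα hcrit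
  -- Key fact: α cannot have both an exceptional coface and an exceptional face.
  have key : ¬ ((∃ β ∈ K, α ⊂ β ∧ β.card = α.card + 1 ∧ f β ≤ f α) ∧
      (∃ γ ∈ K, γ ⊂ α ∧ γ.card + 1 = α.card ∧ f α ≤ f γ)) := by
    rintro ⟨⟨β, hβ, hαβ, hcβ, hfβ⟩, ⟨γ, hγ, hγα, hcγ, hfγ⟩⟩
    obtain ⟨v, hvβ, hvα⟩ := Finset.exists_of_ssubset hαβ
    have hvγ : v ∉ γ := fun h => hvα (hγα.1 h)
    set α' : Finset V := insert v γ with hα'def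
    have hcard' : α'.card = α.card := by
      rw [Finset.card_insert_of_notMem hvγ, hcγ]
    have hne : α' ≠ α := fun h => hvα (h ▸ Finset.mem_insert_self v γ)
    have hsubβ : α' ⊆ β := by
      intro x hx
      rcases Finset.mem_insert.mp hx with h | h
      · exact h ▸ hvβ
      · exact hαβ.1 (hγα.1 h)
    have hα'K : α' ∈ K := hK.2 β hβ α' hsubβ ⟨v, Finset.mem_insert_self v γ⟩
    have hα'β : α' ⊂ β := hsubβ.ssubset_of_ne
      (fun h => by rw [h] at hcard'; omega)
    have hγα' : γ ⊂ α' := Finset.ssubset_insert hvγ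
    by_cases hle : f β ≤ f α'
    · -- both α and α' are faces of β with f β ≤ f
      have := (hf β hβ).2 α hα α' hα'K
        ⟨hαβ, by omega, hfβ⟩ ⟨hα'β, by omega, hle⟩
      exact hne this.symm
    · -- f α' < f β ≤ f α ≤ f γ : both α and α' are cofaces of γ with f ≤ f γ
      push_neg at hle
      have hle' : f α' ≤ f γ := le_trans hle.le (le_trans hfβ hfγ)
      have := (hf γ hγ).1 α hα α' hα'K
        ⟨hγα, by omega, hfγ⟩ ⟨hγα', by omega, hle'⟩
      exact hne this.symm
  unfold IsCritical at hcrit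
  rw [not_and_or, not_not, not_not] at hcrit
  rcases hcrit with hβ | hγ
  · left
    obtain ⟨β, hβK, h1, h2, h3⟩ := hβ
    refine ⟨⟨β, ⟨hβK, h1, h2, h3⟩, ?_⟩, fun hγ => key ⟨⟨β, hβK, h1, h2, h3⟩, hγ⟩⟩
    rintro β' ⟨hβ'K, h1', h2', h3'⟩
    exact (hf α hα).1 β' hβ'K β hβK ⟨h1', h2', h3'⟩ ⟨h1, h2, h3⟩
  · right
    obtain ⟨γ, hγK, h1, h2, h3⟩ := hγ
    refine ⟨⟨γ, ⟨hγK, h1, h2, h3⟩, ?_⟩, fun hβ => key ⟨hβ, ⟨γ, hγK, h1, h2, h3⟩⟩⟩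
    rintro γ' ⟨hγ'K, h1', h2', h3'⟩
    exact (hf α hα).2 γ' hγ'K γ hγK ⟨h1', h2', h3'⟩ ⟨h1, h2, h3⟩
end

section
/- Let K be a finite abstract simplicial complex and f a discrete Morse function on K. Consider the set of gradient pairs, i.e., ordered pairs (α, β) of cells of K with α ⊂ β, dim β = dim α + 1, and f(β) ≤ f(α). Then: (a) both cells of every gradient pair are non-critical; (b) every non-critical cell of K belongs to exactly one gradient pair (either as the lower cell α or as the upper cell β, but not both, and to at most one pair in that role). Consequently the gradient pairs form a perfect matching on the set of non-critical cells of K. -/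
/-- A gradient pair of `f` on `K`: cells `α ⊂ β` of `K` with `dim β = dim α + 1`
and `f β ≤ f α`. -/
def GradPair {V : Type*} [DecidableEq V] (K : Finset (Finset V)) (f : Finset V → ℝ)
    (α β : Finset V) : Prop :=
  α ∈ K ∧ β ∈ K ∧ α ⊂ β ∧ β.card = α.card + 1 ∧ f β ≤ f α

lemma dmf_exclusive {V : Type*} [DecidableEq V]
    (K : Finset (Finset V)) (f : Finset V → ℝ)
    (hK : IsSimplicialComplex K) (hf : IsDMF K f)
    {σ β γ : Finset V} (hσ : σ ∈ K) (hβ : β ∈ K) (hγ : γ ∈ K)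
    (h1 : σ ⊂ β) (h2 : β.card = σ.card + 1) (h3 : f β ≤ f σ)
    (h4 : γ ⊂ σ) (h5 : γ.card + 1 = σ.card) (h6 : f σ ≤ f γ) : False := by
  obtain ⟨w, hwβ, hwσ⟩ : ∃ w ∈ β, w ∉ σ := by
    by_contra h; push_neg at h; exact h1.2 h
  set σ' : Finset V := insert w γ with hσ'def
  have hwγ : w ∉ γ := fun h => hwσ (h4.1 h)
  have hσ'card : σ'.card = γ.card + 1 := Finset.card_insert_of_notMem hwγ
  have hσ'subβ : σ' ⊆ β := by
    intro x hx
    rcases Finset.mem_insert.mp hx with rfl | hx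
    · exact hwβ
    · exact h1.1 (h4.1 hx)
  have hσ'K : σ' ∈ K := hK.2 β hβ σ' hσ'subβ ⟨w, Finset.mem_insert_self _ _⟩
  have hne : σ' ≠ σ := fun h => hwσ (h ▸ Finset.mem_insert_self w γ)
  have hcard : σ'.card + 1 = β.card := by omega
  have hσ'ssβ : σ' ⊂ β :=
    lt_of_le_of_ne hσ'subβ (fun h => by
      have := congrArg Finset.card h; omega)
  have hγσ' : γ ⊂ σ' := Finset.ssubset_insert hwγ
  have hlt1 : f σ' < f β := by
    by_contra h; push_neg at h
    exact hne ((hf β hβ).2 σ' hσ'K σ hσ ⟨hσ'ssβ, hcard, h⟩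
      ⟨h1, by omega, h3⟩)
  have hlt2 : f γ < f σ' := by
    by_contra h; push_neg at h
    exact hne ((hf γ hγ).1 σ' hσ'K σ hσ ⟨hγσ', hσ'card, h⟩
      ⟨h4, by omega, h6⟩)
  linarith

/-- (a) Both cells of every gradient pair are non-critical; (b) every
non-critical cell belongs to exactly one gradient pair: either as the lower
cell of exactly one pair and the upper cell of none, or as the upper cell of
exactly one pair and the lower cell of none.  Hence the gradient pairs form a
perfect matching on the non-critical cells. -/
theorem dmf_gradient_perfect_matching {V : Type*} [DecidableEq V]
    (K : Finset (Finset V)) (f : Finset V → ℝ)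
    (hK : IsSimplicialComplex K) (hf : IsDMF K f) :
    (∀ α β : Finset V, GradPair K f α β →
      ¬ IsCritical K f α ∧ ¬ IsCritical K f β) ∧
    (∀ σ ∈ K, ¬ IsCritical K f σ →
      ((∃! β : Finset V, GradPair K f σ β) ∧ ¬ ∃ α : Finset V, GradPair K f α σ) ∨
      ((∃! α : Finset V, GradPair K f α σ) ∧ ¬ ∃ β : Finset V, GradPair K f σ β)) := by
  constructor
  · rintro α β ⟨hα, hβ, hss, hc, hle⟩
    constructor
    · rintro ⟨h₁, -⟩; exact h₁ ⟨β, hβ, hss, hc, hle⟩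
    · rintro ⟨-, h₂⟩; exact h₂ ⟨α, hα, hss, by omega, hle⟩
  · intro σ hσ hnc
    rw [IsCritical, not_and_or, not_not, not_not] at hnc
    rcases hnc with ⟨β, hβ, hss, hc, hle⟩ | ⟨γ, hγ, hss, hc, hge⟩
    · left
      constructor
      · exact ⟨β, ⟨hσ, hβ, hss, hc, hle⟩, fun β' ⟨_, hβ', hss', hc', hle'⟩ =>
          (hf σ hσ).1 β' hβ' β hβ ⟨hss', hc', hle'⟩ ⟨hss, hc, hle⟩⟩
      · rintro ⟨α, hα, -, hss', hc', hle'⟩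
        exact dmf_exclusive K f hK hf hσ hβ hα hss hc hle hss' (by omega) hle'
    · right
      constructor
      · exact ⟨γ, ⟨hγ, hσ, hss, by omega, hge⟩, fun γ' ⟨hγ', _, hss', hc', hge'⟩ =>
          (hf σ hσ).2 γ' hγ' γ hγ ⟨hss', by omega, hge'⟩ ⟨hss, hc, hge⟩⟩
      · rintro ⟨β, -, hβ, hss', hc', hle'⟩
        exact dmf_exclusive K f hK hf hσ hβ hγ hss' hc' hle' hss hc hge
end
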